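/- arXiv:2307.08840 — 3 statements merged into one kernel-verified Lean document; each statement's English description precedes it below -/
import Mathlib

section
/- Let (𝒳, μ) be the covariate probability space, (𝒯, ν) the posterior parameter probability space, δ̃ a measurable baseline policy, Δ a set of measurable policies δ : 𝒳 → Fin K, and ε ≥ 0. A policy δ* ∈ Δ satisfies R_p(δ*, δ̃) ≤ ε and maximizes the posterior expected value ∫_𝒯 V(δ, θ) dν(θ) among all δ ∈ Δ with R_p(δ, δ̃) ≤ ε, if and only if δ* satisfies ∑_{k=0}^{K-1} ∫_𝒳 1{δ*(x) = k} r_k(x) dμ(x) ≤ ε and maximizes ∑_{k=0}^{K-1} ∫_𝒳 1{δ(x) = k} b_k(x) dμ(x) among all δ ∈ Δ with ∑_{k=0}^{K-1} ∫_𝒳 1{δ(x) = k} r_k(x) dμ(x) ≤ ε. (Theorem 1: the chance-constrained Bayesian safe policy learning problem is equivalent to a deterministic optimization with a linear constraint.) -/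
/-! Both `R_p(δ, δ̃)` and `∫ V(δ, θ) dν(θ)` are integrals over `μ ⊗ ν`. Integrating over `θ`
first (Tonelli, resp. Fubini) and splitting `𝒳` according to the decision `δ x = k` turns them
into `∑ₖ ∫ 1{δ = k} r_k dμ` and `∑ₖ ∫ 1{δ = k} b_k dμ + ∫ V(δ̃, θ) dν(θ)`. Hence the two problems
have the same feasible set and objectives that differ by a constant. -/

open MeasureTheory ProbabilityTheory

variable {X T : Type*} [MeasurableSpace X] [MeasurableSpace T]

/-- The value of policy `δ` under parameter `θ`: `V(δ, θ) = ∫ w x (δ x) θ dμ(x)`. -/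
noncomputable def policyValue {K : ℕ} (μ : Measure X) (w : X → Fin K → T → ℝ)
    (δ : X → Fin K) (θ : T) : ℝ :=
  ∫ x, w x (δ x) θ ∂μ

/-- The Average Conditional Risk of `δ` relative to the baseline `δt` under parameter `θ`:
`R(δ, δt, θ) = μ {x : w x (δ x) θ < w x (δt x) θ}`. -/
noncomputable def ACRisk {K : ℕ} (μ : Measure X) (w : X → Fin K → T → ℝ)
    (δ δt : X → Fin K) (θ : T) : ℝ :=
  (μ {x | w x (δ x) θ < w x (δt x) θ}).toReal

/-- The Posterior Average Conditional Risk: `R_p(δ, δt) = ∫ R(δ, δt, θ) dν(θ)`. -/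
noncomputable def PACRisk {K : ℕ} (μ : Measure X) (ν : Measure T)
    (w : X → Fin K → T → ℝ) (δ δt : X → Fin K) : ℝ :=
  ∫ θ, ACRisk μ w δ δt θ ∂ν

/-- The posterior conditional risk of decision `k`:
`r_k(x) = ν {θ : τ k x θ < 0}` where `τ k x θ = w x k θ - w x (δt x) θ`. -/
noncomputable def condRisk {K : ℕ} (ν : Measure T) (w : X → Fin K → T → ℝ)
    (δt : X → Fin K) (k : Fin K) (x : X) : ℝ :=
  (ν {θ | w x k θ - w x (δt x) θ < 0}).toReal

/-- The posterior conditional benefit of decision `k`: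
`b_k(x) = ∫ τ k x θ dν(θ)` where `τ k x θ = w x k θ - w x (δt x) θ`. -/
noncomputable def condBenefit {K : ℕ} (ν : Measure T) (w : X → Fin K → T → ℝ)
    (δt : X → Fin K) (k : Fin K) (x : X) : ℝ :=
  ∫ θ, (w x k θ - w x (δt x) θ) ∂ν

lemma sum_ite_apply_eq {α ι E : Type*} [Fintype ι] [DecidableEq ι] [AddCommMonoid E]
    (δ : α → ι) (g : ι → α → E) (a : α) :
    (∑ k, if δ a = k then g k a else 0) = g (δ a) a := by
  simp

lemma measurable_apply_index {α ι β : Type*} [MeasurableSpace α] [Countable ι] [MeasurableSpace ι]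
    [MeasurableSingletonClass ι] [MeasurableSpace β] {δ : α → ι} (hδ : Measurable δ)
    {g : ι → α → β} (hg : ∀ k, Measurable (g k)) : Measurable fun a => g (δ a) a :=
  (measurable_from_prod_countable_left (f := fun p : α × ι => g p.2 p.1) hg).comp
    (measurable_id.prodMk hδ)

section ApplyIndex

variable {α ι E : Type*} [MeasurableSpace α] [DecidableEq ι] [MeasurableSpace ι]
  [MeasurableSingletonClass ι] [NormedAddCommGroup E] {μ : Measure α} {δ : α → ι}

lemma MeasureTheory.Integrable.ite_apply_eq (hδ : Measurable δ) {f : α → E}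
    (hf : Integrable f μ) (k : ι) : Integrable (fun a => if δ a = k then f a else 0) μ := by
  have hind : (fun a => if δ a = k then f a else 0) = (δ ⁻¹' {k}).indicator f := by
    ext a
    by_cases h : δ a = k <;> simp [h]
  rw [hind]
  exact hf.indicator (hδ (measurableSet_singleton k))

lemma integrable_apply_index [Fintype ι] (hδ : Measurable δ) {g : ι → α → E}
    (hg : ∀ k, Integrable (g k) μ) : Integrable (fun a => g (δ a) a) μ := by
  simp_rw [← sum_ite_apply_eq δ g]
  exact integrable_finsetSum _ fun k _ => (hg k).ite_apply_eq hδ k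

lemma sum_integral_ite_eq [Fintype ι] [NormedSpace ℝ E] (hδ : Measurable δ) {g : ι → α → E}
    (hg : ∀ k, Integrable (g k) μ) :
    ∑ k, ∫ a, (if δ a = k then g k a else 0) ∂μ = ∫ a, g (δ a) a ∂μ := by
  rw [← integral_finsetSum _ fun k _ => (hg k).ite_apply_eq hδ k]
  simp_rw [sum_ite_apply_eq]

end ApplyIndex

lemma integral_measureReal_prodMk_left_eq_right {α β : Type*} [MeasurableSpace α]
    [MeasurableSpace β] {μ : Measure α} {ν : Measure β} [IsFiniteMeasure μ] [IsFiniteMeasure ν]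
    {s : Set (α × β)} (hs : MeasurableSet s) :
    ∫ x, ν.real (Prod.mk x ⁻¹' s) ∂μ = ∫ y, μ.real ((·, y) ⁻¹' s) ∂ν := by
  simp only [measureReal_def]
  rw [integral_toReal (measurable_measure_prodMk_left hs).aemeasurable
      (ae_of_all _ fun _ => measure_lt_top _ _),
    integral_toReal (measurable_measure_prodMk_right hs).aemeasurable
      (ae_of_all _ fun _ => measure_lt_top _ _),
    ← Measure.prod_apply hs, ← Measure.prod_apply_symm hs]

lemma constrained_argmax_iff_of_eqOn {α : Type*} {Δ : Set α} {r r' v v' : α → ℝ} {c ε : ℝ}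
    {δs : α} (hr : Set.EqOn r r' Δ) (hv : ∀ δ ∈ Δ, v' δ = v δ - c) (hδs : δs ∈ Δ) :
    (r δs ≤ ε ∧ ∀ δ ∈ Δ, r δ ≤ ε → v δ ≤ v δs) ↔
      (r' δs ≤ ε ∧ ∀ δ ∈ Δ, r' δ ≤ ε → v' δ ≤ v' δs) := by
  rw [hr hδs]
  refine and_congr_right fun _ => forall₂_congr fun δ hδ => ?_
  rw [hr hδ, hv δ hδ, hv δs hδs, sub_le_sub_iff_right]

section Posterior

variable {K : ℕ} {μ : Measure X} {ν : Measure T} {w : X → Fin K → T → ℝ} {δ δt : X → Fin K}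

lemma measurable_apply_fst_index (hw : ∀ k : Fin K, Measurable fun p : X × T => w p.1 k p.2)
    (hδ : Measurable δ) : Measurable fun p : X × T => w p.1 (δ p.1) p.2 :=
  measurable_apply_index (g := fun k p => w p.1 k p.2) (hδ.comp measurable_fst) hw

lemma integrable_apply_fst_index
    (hint : ∀ k : Fin K, Integrable (fun p : X × T => w p.1 k p.2) (μ.prod ν))
    (hδ : Measurable δ) : Integrable (fun p : X × T => w p.1 (δ p.1) p.2) (μ.prod ν) :=
  integrable_apply_index (g := fun k p => w p.1 k p.2) (hδ.comp measurable_fst) hint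

lemma measurable_condRisk [SFinite ν]
    (hw : ∀ k : Fin K, Measurable fun p : X × T => w p.1 k p.2)
    (hδt : Measurable δt) (k : Fin K) : Measurable (condRisk ν w δt k) :=
  (measurable_measure_prodMk_left (measurableSet_lt
    ((hw k).sub (measurable_apply_fst_index hw hδt)) measurable_const)).ennreal_toReal

lemma integrable_condRisk [IsFiniteMeasure μ] [IsFiniteMeasure ν]
    (hw : ∀ k : Fin K, Measurable fun p : X × T => w p.1 k p.2)
    (hδt : Measurable δt) (k : Fin K) : Integrable (condRisk ν w δt k) μ :=
  .of_mem_Icc 0 (ν.real Set.univ) (measurable_condRisk hw hδt k).aemeasurable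
    (ae_of_all _ fun _ => ⟨measureReal_nonneg, measureReal_mono (Set.subset_univ _)⟩)

lemma sum_integral_condRisk_eq_PACRisk [IsFiniteMeasure μ] [IsFiniteMeasure ν]
    (hw : ∀ k : Fin K, Measurable fun p : X × T => w p.1 k p.2)
    (hδt : Measurable δt) (hδ : Measurable δ) :
    ∑ k, ∫ x, (if δ x = k then condRisk ν w δt k x else 0) ∂μ = PACRisk μ ν w δ δt := by
  set S := {p : X × T | w p.1 (δ p.1) p.2 < w p.1 (δt p.1) p.2}
  have hS : MeasurableSet S :=
    measurableSet_lt (measurable_apply_fst_index hw hδ) (measurable_apply_fst_index hw hδt)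
  have hslice : ∀ x, condRisk ν w δt (δ x) x = ν.real (Prod.mk x ⁻¹' S) := fun x => by
    simp [condRisk, S, sub_neg, measureReal_def]
  rw [sum_integral_ite_eq hδ (integrable_condRisk hw hδt)]
  simp_rw [hslice]
  exact integral_measureReal_prodMk_left_eq_right hS

lemma integral_policyValue_eq_integral_prod [SFinite μ] [SFinite ν]
    (hint : ∀ k : Fin K, Integrable (fun p : X × T => w p.1 k p.2) (μ.prod ν))
    (hδ : Measurable δ) :
    ∫ θ, policyValue μ w δ θ ∂ν = ∫ p, w p.1 (δ p.1) p.2 ∂μ.prod ν :=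
  (integral_prod_symm _ (integrable_apply_fst_index hint hδ)).symm

lemma integrable_condBenefit [SFinite ν]
    (hint : ∀ k : Fin K, Integrable (fun p : X × T => w p.1 k p.2) (μ.prod ν))
    (hδt : Measurable δt) (k : Fin K) : Integrable (condBenefit ν w δt k) μ :=
  ((hint k).sub (integrable_apply_fst_index hint hδt)).integral_prod_left

lemma sum_integral_condBenefit_eq [SFinite μ] [SFinite ν]
    (hint : ∀ k : Fin K, Integrable (fun p : X × T => w p.1 k p.2) (μ.prod ν))
    (hδt : Measurable δt) (hδ : Measurable δ) :
    ∑ k, ∫ x, (if δ x = k then condBenefit ν w δt k x else 0) ∂μ =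
      ∫ θ, policyValue μ w δ θ ∂ν - ∫ θ, policyValue μ w δt θ ∂ν := by
  rw [sum_integral_ite_eq hδ (integrable_condBenefit hint hδt),
    integral_policyValue_eq_integral_prod hint hδ, integral_policyValue_eq_integral_prod hint hδt,
    ← integral_sub (integrable_apply_fst_index hint hδ) (integrable_apply_fst_index hint hδt)]
  exact (integral_prod _
    ((integrable_apply_fst_index hint hδ).sub (integrable_apply_fst_index hint hδt))).symm

end Posterior

theorem bayes_safe_policy_equiv_general {K : ℕ}
    (μ : Measure X) (ν : Measure T) [IsProbabilityMeasure μ] [IsProbabilityMeasure ν]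
    (w : X → Fin K → T → ℝ)
    (hw : ∀ k : Fin K, Measurable fun p : X × T => w p.1 k p.2)
    (hint : ∀ k : Fin K, Integrable (fun p : X × T => w p.1 k p.2) (μ.prod ν))
    (δt : X → Fin K) (hδt : Measurable δt)
    (Δ : Set (X → Fin K)) (hΔ : ∀ δ ∈ Δ, Measurable δ)
    (ε : ℝ)
    (δs : X → Fin K) (hδs : δs ∈ Δ) :
    (PACRisk μ ν w δs δt ≤ ε ∧
        ∀ δ ∈ Δ, PACRisk μ ν w δ δt ≤ ε →
          (∫ θ, policyValue μ w δ θ ∂ν) ≤ ∫ θ, policyValue μ w δs θ ∂ν) ↔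
      ((∑ k : Fin K, ∫ x, (if δs x = k then condRisk ν w δt k x else 0) ∂μ) ≤ ε ∧
        ∀ δ ∈ Δ,
          (∑ k : Fin K, ∫ x, (if δ x = k then condRisk ν w δt k x else 0) ∂μ) ≤ ε →
            (∑ k : Fin K, ∫ x, (if δ x = k then condBenefit ν w δt k x else 0) ∂μ) ≤
              ∑ k : Fin K, ∫ x, (if δs x = k then condBenefit ν w δt k x else 0) ∂μ) :=
  constrained_argmax_iff_of_eqOn
    (fun δ hδ => (sum_integral_condRisk_eq_PACRisk hw hδt (hΔ δ hδ)).symm)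
    (fun δ hδ => sum_integral_condBenefit_eq hint hδt (hΔ δ hδ)) hδs

/-- Theorem 1 of the paper: the chance-constrained Bayesian safe policy learning problem
(maximize the posterior expected value subject to `PACRisk ≤ ε`) is equivalent to the
deterministic optimization problem with the linear objective
`∑ k ∫ 1{δ(x) = k} b_k(x) dμ(x)` and the linear constraint
`∑ k ∫ 1{δ(x) = k} r_k(x) dμ(x) ≤ ε`. -/
theorem bayes_safe_policy_equiv {K : ℕ}
    (μ : Measure X) (ν : Measure T) [IsProbabilityMeasure μ] [IsProbabilityMeasure ν]
    (w : X → Fin K → T → ℝ)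
    (hw : ∀ k : Fin K, Measurable fun p : X × T => w p.1 k p.2)
    (hint : ∀ k : Fin K, Integrable (fun p : X × T => w p.1 k p.2) (μ.prod ν))
    (δt : X → Fin K) (hδt : Measurable δt)
    (Δ : Set (X → Fin K)) (hΔ : ∀ δ ∈ Δ, Measurable δ)
    (ε : ℝ) (hε : 0 ≤ ε)
    (δs : X → Fin K) (hδs : δs ∈ Δ) :
    (PACRisk μ ν w δs δt ≤ ε ∧
        ∀ δ ∈ Δ, PACRisk μ ν w δ δt ≤ ε →
          (∫ θ, policyValue μ w δ θ ∂ν) ≤ ∫ θ, policyValue μ w δs θ ∂ν) ↔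
      ((∑ k : Fin K, ∫ x, (if δs x = k then condRisk ν w δt k x else 0) ∂μ) ≤ ε ∧
        ∀ δ ∈ Δ,
          (∑ k : Fin K, ∫ x, (if δ x = k then condRisk ν w δt k x else 0) ∂μ) ≤ ε →
            (∑ k : Fin K, ∫ x, (if δ x = k then condBenefit ν w δt k x else 0) ∂μ) ≤
              ∑ k : Fin K, ∫ x, (if δs x = k then condBenefit ν w δt k x else 0) ∂μ) :=
  bayes_safe_policy_equiv_general μ ν w hw hint δt hδt Δ hΔ ε δs hδs
end

section
/- For every measurable policy δ : 𝒳 → Fin K, the Posterior Average Conditional Risk admits the linear representation R_p(δ, δ̃) = ∑_{k=0}^{K-1} ∫_𝒳 1{δ(x) = k} r_k(x) dμ(x), where r_k(x) = ν{θ : τ k x θ < 0}. -/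
open MeasureTheory ProbabilityTheory

variable {X T : Type*} [MeasurableSpace X] [MeasurableSpace T]

/-!
Both sides are the (μ ⊗ ν)-measure of the set of pairs (x, θ) at which δ does worse than the
baseline. Integrating its θ-sections against ν gives `PACRisk`; integrating its x-sections
against μ gives `∫ r_{δ x}(x) dμ(x)`, which splits into the sum by the value of `δ x`.
-/

section Prod

variable {α β : Type*} [MeasurableSpace α] [MeasurableSpace β] {μ : Measure α} {ν : Measure β}
  {s : Set (α × β)}

lemma measureReal_prod_apply [IsFiniteMeasure ν] (hs : MeasurableSet s) :
    (μ.prod ν).real s = ∫ x, ν.real (Prod.mk x ⁻¹' s) ∂μ := by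
  rw [measureReal_def, Measure.prod_apply hs, ← integral_toReal
    (measurable_measure_prodMk_left hs).aemeasurable (ae_of_all _ fun _ => measure_lt_top _ _)]
  rfl

lemma measureReal_prod_apply_symm [IsFiniteMeasure μ] [SFinite ν] (hs : MeasurableSet s) :
    (μ.prod ν).real s = ∫ y, μ.real ((fun x => (x, y)) ⁻¹' s) ∂ν := by
  rw [measureReal_def, Measure.prod_apply_symm hs, ← integral_toReal
    (measurable_measure_prodMk_right hs).aemeasurable (ae_of_all _ fun _ => measure_lt_top _ _)]
  rfl

end Prod

lemma Measurable.apply_of_countable {α ι β : Type*} [MeasurableSpace α] [MeasurableSpace ι]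
    [MeasurableSpace β] [Countable ι] [MeasurableSingletonClass ι] {f : α → ι → β}
    (hf : ∀ i, Measurable fun a => f a i) {g : α → ι} (hg : Measurable g) :
    Measurable fun a => f a (g a) :=
  (measurable_from_prod_countable_left (f := fun p : α × ι => f p.1 p.2) hf).comp
    (measurable_id.prodMk hg)

lemma integral_apply_eq_sum_ite {α ι E : Type*} [MeasurableSpace α] [MeasurableSpace ι]
    [MeasurableSingletonClass ι] [Fintype ι] [DecidableEq ι] [NormedAddCommGroup E]
    [NormedSpace ℝ E] {μ : Measure α} {g : α → ι} (hg : Measurable g) {f : ι → α → E}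
    (hf : ∀ i, Integrable (f i) μ) :
    ∫ a, f (g a) a ∂μ = ∑ i, ∫ a, (if g a = i then f i a else 0) ∂μ := by
  have hpiece (i : ι) : Integrable (fun a => if g a = i then f i a else 0) μ := by
    refine ((hf i).indicator (hg (measurableSet_singleton i))).congr (ae_of_all _ fun a => ?_)
    simp only [Set.indicator, Set.mem_preimage, Set.mem_singleton_iff]
  rw [← integral_finsetSum _ fun i _ => hpiece i]
  simp only [Finset.sum_ite_eq, Finset.mem_univ, if_true]

lemma condRisk_apply_eq_measureReal {α β : Type*} [MeasurableSpace β] {K : ℕ} (ν : Measure β)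
    (w : α → Fin K → β → ℝ) (δt δ : α → Fin K) (a : α) :
    condRisk ν w δt (δ a) a =
      ν.real (Prod.mk a ⁻¹' {p : α × β | w p.1 (δ p.1) p.2 < w p.1 (δt p.1) p.2}) := by
  simp only [condRisk, sub_neg, measureReal_def]
  rfl

section Risk

variable {K : ℕ} {μ : Measure X} {ν : Measure T} {w : X → Fin K → T → ℝ} {δ δt : X → Fin K}

lemma measurableSet_lt_baseline (hw : ∀ k : Fin K, Measurable fun p : X × T => w p.1 k p.2)
    (hδt : Measurable δt) (hδ : Measurable δ) :
    MeasurableSet {p : X × T | w p.1 (δ p.1) p.2 < w p.1 (δt p.1) p.2} :=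
  measurableSet_lt (.apply_of_countable hw (hδ.comp measurable_fst))
    (.apply_of_countable hw (hδt.comp measurable_fst))

lemma PACRisk_eq_integral_condRisk [IsFiniteMeasure μ] [IsFiniteMeasure ν]
    (hw : ∀ k : Fin K, Measurable fun p : X × T => w p.1 k p.2) (hδt : Measurable δt)
    (hδ : Measurable δ) :
    PACRisk μ ν w δ δt = ∫ x, condRisk ν w δt (δ x) x ∂μ := by
  have hS := measurableSet_lt_baseline hw hδt hδ
  simp only [condRisk_apply_eq_measureReal ν w δt δ]
  exact (measureReal_prod_apply_symm hS).symm.trans (measureReal_prod_apply hS)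

end Risk

/-- For every measurable policy `δ`, the PACRisk admits the linear representation
`R_p(δ, δt) = ∑ k ∫ 1{δ(x) = k} r_k(x) dμ(x)`. -/
theorem pacrisk_linear_representation {K : ℕ}
    (μ : Measure X) (ν : Measure T) [IsProbabilityMeasure μ] [IsProbabilityMeasure ν]
    (w : X → Fin K → T → ℝ)
    (hw : ∀ k : Fin K, Measurable fun p : X × T => w p.1 k p.2)
    (δt : X → Fin K) (hδt : Measurable δt)
    (δ : X → Fin K) (hδ : Measurable δ) :
    PACRisk μ ν w δ δt =
      ∑ k : Fin K, ∫ x, (if δ x = k then condRisk ν w δt k x else 0) ∂μ := by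
  rw [PACRisk_eq_integral_condRisk hw hδt hδ]
  exact integral_apply_eq_sum_ite hδ (integrable_condRisk hw hδt)
end

section
/- For every measurable policy δ : 𝒳 → Fin K, the difference between the posterior expected values of δ and of the baseline policy δ̃ equals the linear functional ∫_𝒯 V(δ, θ) dν(θ) − ∫_𝒯 V(δ̃, θ) dν(θ) = ∑_{k=0}^{K-1} ∫_𝒳 1{δ(x) = k} b_k(x) dμ(x), where b_k(x) = ∫_𝒯 τ k x θ dν(θ). -/
open MeasureTheory ProbabilityTheory

variable {X T : Type*} [MeasurableSpace X] [MeasurableSpace T]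

/-! Both posterior values are integrals over `μ ⊗ ν`, so by Fubini their difference is the
`μ`-integral of the posterior benefit `b_{δ x}(x)`; splitting this integrand along the finitely
many values of `δ` gives the sum. -/

section FiniteSelection

variable {α ι E : Type*} [MeasurableSpace α] [Fintype ι] [DecidableEq ι] [MeasurableSpace ι]
  [MeasurableSingletonClass ι] [NormedAddCommGroup E] {μ : Measure α} {f : ι → α → E}
  {d : α → ι}

omit [Fintype ι] in
theorem integrable_ite_eq (hf : ∀ i, Integrable (f i) μ) (hd : Measurable d) (i : ι) :
    Integrable (fun a => if d a = i then f i a else 0) μ := by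
  refine ((hf i).indicator (hd (measurableSet_singleton i))).congr (ae_of_all _ fun a => ?_)
  by_cases h : d a = i <;> simp [h]

theorem integrable_select (hf : ∀ i, Integrable (f i) μ) (hd : Measurable d) :
    Integrable (fun a => f (d a) a) μ := by
  simpa only [Finset.sum_ite_eq, Finset.mem_univ, if_true] using
    integrable_finsetSum Finset.univ fun i _ => integrable_ite_eq hf hd i

theorem sum_integral_ite_eq_integral_select [NormedSpace ℝ E] (hf : ∀ i, Integrable (f i) μ)
    (hd : Measurable d) :
    ∑ i, ∫ a, (if d a = i then f i a else 0) ∂μ = ∫ a, f (d a) a ∂μ := by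
  rw [← integral_finsetSum _ fun i _ => integrable_ite_eq hf hd i]
  simp only [Finset.sum_ite_eq, Finset.mem_univ, if_true]

end FiniteSelection

theorem posterior_value_difference_general {K : ℕ}
    (μ : Measure X) (ν : Measure T) [IsProbabilityMeasure μ] [IsProbabilityMeasure ν]
    (w : X → Fin K → T → ℝ)
    (hint : ∀ k : Fin K, Integrable (fun p : X × T => w p.1 k p.2) (μ.prod ν))
    (δt : X → Fin K) (hδt : Measurable δt)
    (δ : X → Fin K) (hδ : Measurable δ) :
    (∫ θ, policyValue μ w δ θ ∂ν) - (∫ θ, policyValue μ w δt θ ∂ν) =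
      ∑ k : Fin K, ∫ x, (if δ x = k then condBenefit ν w δt k x else 0) ∂μ := by
  have hpolicy : ∀ d : X → Fin K, Measurable d →
      Integrable (fun p : X × T => w p.1 (d p.1) p.2) (μ.prod ν) := fun d hd =>
    integrable_select (f := fun k p => w p.1 k p.2) hint (hd.comp measurable_fst)
  have hbenefit : ∀ k, Integrable (condBenefit ν w δt k) μ := fun k =>
    ((hint k).sub (hpolicy δt hδt)).integral_prod_left
  calc (∫ θ, policyValue μ w δ θ ∂ν) - (∫ θ, policyValue μ w δt θ ∂ν)
      = (∫ p, w p.1 (δ p.1) p.2 ∂μ.prod ν) - ∫ p, w p.1 (δt p.1) p.2 ∂μ.prod ν := by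
        rw [integral_prod_symm _ (hpolicy δ hδ), integral_prod_symm _ (hpolicy δt hδt)]
        rfl
    _ = ∫ p, (w p.1 (δ p.1) p.2 - w p.1 (δt p.1) p.2) ∂μ.prod ν :=
        (integral_sub (hpolicy δ hδ) (hpolicy δt hδt)).symm
    _ = ∫ x, condBenefit ν w δt (δ x) x ∂μ :=
        integral_prod _ ((hpolicy δ hδ).sub (hpolicy δt hδt))
    _ = ∑ k : Fin K, ∫ x, (if δ x = k then condBenefit ν w δt k x else 0) ∂μ :=
        (sum_integral_ite_eq_integral_select hbenefit hδ).symm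

/-- The difference between the posterior expected values of `δ` and the baseline `δt` equals
the linear functional `∑ k ∫ 1{δ(x) = k} b_k(x) dμ(x)`. -/
theorem posterior_value_difference {K : ℕ}
    (μ : Measure X) (ν : Measure T) [IsProbabilityMeasure μ] [IsProbabilityMeasure ν]
    (w : X → Fin K → T → ℝ)
    (hw : ∀ k : Fin K, Measurable fun p : X × T => w p.1 k p.2)
    (hint : ∀ k : Fin K, Integrable (fun p : X × T => w p.1 k p.2) (μ.prod ν))
    (δt : X → Fin K) (hδt : Measurable δt)
    (δ : X → Fin K) (hδ : Measurable δ) :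
    (∫ θ, policyValue μ w δ θ ∂ν) - (∫ θ, policyValue μ w δt θ ∂ν) =
      ∑ k : Fin K, ∫ x, (if δ x = k then condBenefit ν w δt k x else 0) ∂μ :=
  posterior_value_difference_general μ ν w hint δt hδt δ hδ
end
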